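/- arXiv:1103.2573 — 7 statements merged into one kernel-verified Lean document; each statement's English description precedes it below -/
import Mathlib

section
/- Let $a, b, c, d$ be integers and $k \geq 1$ an integer. If $2^{2k}$ divides $a^2 + b^2 + c^2 + d^2$, then $2^{k-1}$ divides each of $a, b, c, d$, and moreover either $2^k$ divides all four of $a, b, c, d$, or $2^k$ divides none of $a, b, c, d$. -/
private lemma sqclass (x : ℤ) : ∃ t, (x^2 = 4*t ∧ (2:ℤ) ∣ x) ∨ (x^2 = 8*t+1 ∧ ¬ (2:ℤ) ∣ x) := by
  rcases Int.even_or_odd x with ⟨m, rfl⟩ | ⟨m, rfl⟩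
  · exact ⟨m^2, Or.inl ⟨by ring, ⟨m, by ring⟩⟩⟩
  · rcases Int.even_or_odd m with ⟨u, rfl⟩ | ⟨u, rfl⟩
    · exact ⟨2*u^2+u, Or.inr ⟨by ring, by omega⟩⟩
    · exact ⟨2*u^2+3*u+1, Or.inr ⟨by ring, by omega⟩⟩

private lemma base_case (a b c d : ℤ) (h : (4:ℤ) ∣ a^2+b^2+c^2+d^2) :
    ((2:ℤ) ∣ a ∧ (2:ℤ) ∣ b ∧ (2:ℤ) ∣ c ∧ (2:ℤ) ∣ d) ∨
    (¬ (2:ℤ) ∣ a ∧ ¬ (2:ℤ) ∣ b ∧ ¬ (2:ℤ) ∣ c ∧ ¬ (2:ℤ) ∣ d) := by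
  obtain ⟨p, hp⟩ := sqclass a
  obtain ⟨q, hq⟩ := sqclass b
  obtain ⟨r, hr⟩ := sqclass c
  obtain ⟨s, hs⟩ := sqclass d
  rcases hp with ⟨hp, ha⟩ | ⟨hp, ha⟩ <;> rcases hq with ⟨hq, hb⟩ | ⟨hq, hb⟩ <;>
    rcases hr with ⟨hr, hc⟩ | ⟨hr, hc⟩ <;> rcases hs with ⟨hs, hd⟩ | ⟨hs, hd⟩ <;>
    rw [hp, hq, hr, hs] at h <;> first
      | exact Or.inl ⟨ha, hb, hc, hd⟩
      | exact Or.inr ⟨ha, hb, hc, hd⟩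
      | (exfalso; omega)

private lemma step_iff (n : ℕ) (x : ℤ) : (2:ℤ)^(n+1) ∣ 2^n * x ↔ (2:ℤ) ∣ x := by
  rw [pow_succ, mul_dvd_mul_iff_left (pow_ne_zero n (two_ne_zero))]

private lemma aux : ∀ k : ℕ, 1 ≤ k → ∀ a b c d : ℤ,
    (2 : ℤ) ^ (2 * k) ∣ a ^ 2 + b ^ 2 + c ^ 2 + d ^ 2 →
    ((2 : ℤ) ^ (k - 1) ∣ a ∧ (2 : ℤ) ^ (k - 1) ∣ b ∧
     (2 : ℤ) ^ (k - 1) ∣ c ∧ (2 : ℤ) ^ (k - 1) ∣ d) ∧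
    (((2 : ℤ) ^ k ∣ a ∧ (2 : ℤ) ^ k ∣ b ∧ (2 : ℤ) ^ k ∣ c ∧ (2 : ℤ) ^ k ∣ d) ∨
     (¬ (2 : ℤ) ^ k ∣ a ∧ ¬ (2 : ℤ) ^ k ∣ b ∧ ¬ (2 : ℤ) ^ k ∣ c ∧ ¬ (2 : ℤ) ^ k ∣ d)) := by
  intro k hk
  induction k, hk using Nat.le_induction with
  | base =>
    intro a b c d h
    have h4 : (4:ℤ) ∣ a^2+b^2+c^2+d^2 := by norm_num at h; exact h
    simp only [show (1:ℕ)-1 = 0 from rfl, pow_zero, pow_one]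
    exact ⟨⟨one_dvd _, one_dvd _, one_dvd _, one_dvd _⟩, base_case a b c d h4⟩
  | succ n hn ih =>
    intro a b c d h
    have h' : (2:ℤ)^(2*n) ∣ a^2+b^2+c^2+d^2 :=
      dvd_trans (pow_dvd_pow 2 (by omega)) h
    obtain ⟨⟨Ha, Hb, Hc, Hd⟩, hdis⟩ := ih a b c d h'
    rcases hdis with ⟨ha, hb, hc, hd⟩ | ⟨ha, hb, hc, hd⟩
    · obtain ⟨a1, rfl⟩ := ha
      obtain ⟨b1, rfl⟩ := hb
      obtain ⟨c1, rfl⟩ := hc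
      obtain ⟨d1, rfl⟩ := hd
      have hP : (2:ℤ)^(2*n) = (2^n)^2 := by rw [mul_comm, pow_mul]
      have h4 : (4:ℤ) ∣ a1^2+b1^2+c1^2+d1^2 := by
        have heq : (2:ℤ)^(2*(n+1)) = (2^n)^2 * 4 := by
          rw [show 2*(n+1) = 2*n+2 from by ring, pow_add, hP]; norm_num
        have heq2 : (2^n*a1)^2+(2^n*b1)^2+(2^n*c1)^2+(2^n*d1)^2
            = (2^n:ℤ)^2 * (a1^2+b1^2+c1^2+d1^2) := by ring
        rw [heq, heq2] at h
        exact (mul_dvd_mul_iff_left (pow_ne_zero 2 (pow_ne_zero n (two_ne_zero)))).mp h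
      constructor
      · simp only [Nat.add_sub_cancel]
        exact ⟨dvd_mul_right _ _, dvd_mul_right _ _, dvd_mul_right _ _, dvd_mul_right _ _⟩
      · rcases base_case a1 b1 c1 d1 h4 with ⟨h1, h2, h3, h4'⟩ | ⟨h1, h2, h3, h4'⟩
        · exact Or.inl ⟨(step_iff n a1).mpr h1, (step_iff n b1).mpr h2,
            (step_iff n c1).mpr h3, (step_iff n d1).mpr h4'⟩
        · exact Or.inr ⟨fun hx => h1 ((step_iff n a1).mp hx),
            fun hx => h2 ((step_iff n b1).mp hx),
            fun hx => h3 ((step_iff n c1).mp hx),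
            fun hx => h4' ((step_iff n d1).mp hx)⟩
    · exfalso
      obtain ⟨a1, rfl⟩ := Ha
      obtain ⟨b1, rfl⟩ := Hb
      obtain ⟨c1, rfl⟩ := Hc
      obtain ⟨d1, rfl⟩ := Hd
      have hpow : (2:ℤ)^(n-1) * 2 = 2^n := by
        rw [← pow_succ, show n - 1 + 1 = n from by omega]
      have odda1 : ¬ (2:ℤ) ∣ a1 := fun ⟨m, hm⟩ => ha ⟨m, by rw [hm, ← mul_assoc, hpow]⟩
      have oddb1 : ¬ (2:ℤ) ∣ b1 := fun ⟨m, hm⟩ => hb ⟨m, by rw [hm, ← mul_assoc, hpow]⟩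
      have oddc1 : ¬ (2:ℤ) ∣ c1 := fun ⟨m, hm⟩ => hc ⟨m, by rw [hm, ← mul_assoc, hpow]⟩
      have oddd1 : ¬ (2:ℤ) ∣ d1 := fun ⟨m, hm⟩ => hd ⟨m, by rw [hm, ← mul_assoc, hpow]⟩
      obtain ⟨p, hp | ⟨hp, -⟩⟩ := sqclass a1
      · exact absurd hp.2 odda1
      obtain ⟨q, hq | ⟨hq, -⟩⟩ := sqclass b1
      · exact absurd hq.2 oddb1
      obtain ⟨r, hr | ⟨hr, -⟩⟩ := sqclass c1
      · exact absurd hr.2 oddc1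
      obtain ⟨s, hs | ⟨hs, -⟩⟩ := sqclass d1
      · exact absurd hs.2 oddd1
      have heq : (2:ℤ)^(2*(n+1)) = (2^(n-1))^2 * 16 := by
        rw [show 2*(n+1) = 2*(n-1)+4 from by omega, pow_add, mul_comm 2 (n-1), pow_mul]
        norm_num
      have heq2 : (2^(n-1)*a1)^2+(2^(n-1)*b1)^2+(2^(n-1)*c1)^2+(2^(n-1)*d1)^2
          = (2^(n-1):ℤ)^2 * (a1^2+b1^2+c1^2+d1^2) := by ring
      rw [heq, heq2] at h
      have h16 : (16:ℤ) ∣ a1^2+b1^2+c1^2+d1^2 :=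
        (mul_dvd_mul_iff_left (pow_ne_zero 2 (pow_ne_zero _ (two_ne_zero)))).mp h
      rw [hp, hq, hr, hs] at h16
      omega

theorem stmt_0 (a b c d : ℤ) (k : ℕ) (hk : 1 ≤ k)
    (h : (2 : ℤ) ^ (2 * k) ∣ a ^ 2 + b ^ 2 + c ^ 2 + d ^ 2) :
    ((2 : ℤ) ^ (k - 1) ∣ a ∧ (2 : ℤ) ^ (k - 1) ∣ b ∧
     (2 : ℤ) ^ (k - 1) ∣ c ∧ (2 : ℤ) ^ (k - 1) ∣ d) ∧
    (((2 : ℤ) ^ k ∣ a ∧ (2 : ℤ) ^ k ∣ b ∧ (2 : ℤ) ^ k ∣ c ∧ (2 : ℤ) ^ k ∣ d) ∨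
     (¬ (2 : ℤ) ^ k ∣ a ∧ ¬ (2 : ℤ) ^ k ∣ b ∧ ¬ (2 : ℤ) ^ k ∣ c ∧ ¬ (2 : ℤ) ^ k ∣ d)) :=
  aux k hk a b c d h
end

section
/- Let $z_1, z_2, z_3, z_4$ be Gaussian integers (complex numbers whose real and imaginary parts are integers) satisfying $|z_1|^2 + |z_2|^2 = |z_3|^2 + |z_4|^2$, and let $k \geq 0$ be an integer such that $2^k$ divides the integer $|z_1|^2 + |z_2|^2$. Then $2^k$ divides the integer $\mathrm{Im}(z_1 \overline{z_3} + z_2 \overline{z_4}) - \mathrm{Re}(z_1 \overline{z_3} + z_2 \overline{z_4})$. -/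
lemma mod2key : ∀ x1 y1 x2 y2 x3 y3 x4 y4 : ZMod 2,
    x1^2+y1^2+x2^2+y2^2 = 0 → x3^2+y3^2+x4^2+y4^2 = 0 →
    (y1*x3 - x1*y3 - x1*x3 - y1*y3) + (y2*x4 - x2*y4 - x2*x4 - y2*y4) = 0 := by decide

lemma mod4key : ∀ x1 y1 x2 y2 : ZMod 4,
    x1^2+y1^2+x2^2+y2^2 = 0 → 2*(x1+y1) = 0 ∧ 2*(x2+y2) = 0 := by decide

lemma intkey : ∀ k : ℕ, ∀ a1 b1 a2 b2 a3 b3 a4 b4 : ℤ,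
    a1^2+b1^2+a2^2+b2^2 = a3^2+b3^2+a4^2+b4^2 →
    (2:ℤ)^k ∣ a1^2+b1^2+a2^2+b2^2 →
    (2:ℤ)^k ∣ (b1*a3 - a1*b3 - a1*a3 - b1*b3) + (b2*a4 - a2*b4 - a2*a4 - b2*b4) := by
  intro k
  induction k with
  | zero => intro _ _ _ _ _ _ _ _ _ _; simpa using one_dvd _
  | succ k ih =>
    intro a1 b1 a2 b2 a3 b3 a4 b4 heq hN
    rcases k with _ | m
    · -- parity case
      have hN2 : (2:ℤ) ∣ a1^2+b1^2+a2^2+b2^2 := by simpa using hN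
      have hN2' : (2:ℤ) ∣ a3^2+b3^2+a4^2+b4^2 := heq ▸ hN2
      have c1 : ((a1^2+b1^2+a2^2+b2^2 : ℤ) : ZMod 2) = 0 :=
        (ZMod.intCast_zmod_eq_zero_iff_dvd _ 2).mpr hN2
      have c2 : ((a3^2+b3^2+a4^2+b4^2 : ℤ) : ZMod 2) = 0 :=
        (ZMod.intCast_zmod_eq_zero_iff_dvd _ 2).mpr hN2'
      push_cast at c1 c2
      have := mod2key (a1:ZMod 2) b1 a2 b2 a3 b3 a4 b4 c1 c2
      have h : (((b1*a3 - a1*b3 - a1*a3 - b1*b3) + (b2*a4 - a2*b4 - a2*a4 - b2*b4) : ℤ) : ZMod 2) = 0 := by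
        push_cast; exact this
      simpa using (ZMod.intCast_zmod_eq_zero_iff_dvd _ 2).mp h
    · -- descent case: 4 ∣ N
      have h4 : (4:ℤ) ∣ a1^2+b1^2+a2^2+b2^2 := by
        have : (2:ℤ)^2 ∣ (2:ℤ)^(m+1+1) := pow_dvd_pow 2 (by omega)
        exact dvd_trans (by norm_num at this ⊢; exact this) hN
      have h4' : (4:ℤ) ∣ a3^2+b3^2+a4^2+b4^2 := heq ▸ h4
      have ev : ∀ a b : ℤ, 2*(((a:ZMod 4))+(b:ZMod 4)) = 0 → (2:ℤ) ∣ a + b := by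
        intro a b h
        have : (((2*(a+b)) : ℤ) : ZMod 4) = 0 := by push_cast; ring_nf; ring_nf at h; exact h
        have := (ZMod.intCast_zmod_eq_zero_iff_dvd _ 4).mp this
        omega
      have c1 : ((a1^2+b1^2+a2^2+b2^2 : ℤ) : ZMod 4) = 0 :=
        (ZMod.intCast_zmod_eq_zero_iff_dvd _ 4).mpr h4
      have c2 : ((a3^2+b3^2+a4^2+b4^2 : ℤ) : ZMod 4) = 0 :=
        (ZMod.intCast_zmod_eq_zero_iff_dvd _ 4).mpr h4'
      push_cast at c1 c2
      obtain ⟨e1, e2⟩ := mod4key (a1:ZMod 4) b1 a2 b2 c1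
      obtain ⟨e3, e4⟩ := mod4key (a3:ZMod 4) b3 a4 b4 c2
      have h1 := ev _ _ e1; have h2 := ev _ _ e2
      have h3 := ev _ _ e3; have h4e := ev _ _ e4
      obtain ⟨c1', hc1⟩ := h1
      obtain ⟨c2', hc2⟩ := h2
      obtain ⟨c3', hc3⟩ := h3
      obtain ⟨c4', hc4⟩ := h4e
      obtain ⟨d1, ha1, hb1⟩ : ∃ d, a1 = c1' - d ∧ b1 = c1' + d := ⟨c1' - a1, by omega, by omega⟩
      obtain ⟨d2, ha2, hb2⟩ : ∃ d, a2 = c2' - d ∧ b2 = c2' + d := ⟨c2' - a2, by omega, by omega⟩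
      obtain ⟨d3, ha3, hb3⟩ : ∃ d, a3 = c3' - d ∧ b3 = c3' + d := ⟨c3' - a3, by omega, by omega⟩
      obtain ⟨d4, ha4, hb4⟩ : ∃ d, a4 = c4' - d ∧ b4 = c4' + d := ⟨c4' - a4, by omega, by omega⟩
      subst ha1 hb1 ha2 hb2 ha3 hb3 ha4 hb4
      have heq' : c1'^2+d1^2+c2'^2+d2^2 = c3'^2+d3^2+c4'^2+d4^2 := by nlinarith [heq]
      have hN' : (2:ℤ)^(m+1) ∣ c1'^2+d1^2+c2'^2+d2^2 := by
        have hNe : (c1'-d1)^2+(c1'+d1)^2+(c2'-d2)^2+(c2'+d2)^2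
            = 2*(c1'^2+d1^2+c2'^2+d2^2) := by ring
        rw [hNe] at hN
        have : (2:ℤ)^(m+1+1) = 2 * 2^(m+1) := by ring
        rw [this] at hN
        exact (mul_dvd_mul_iff_left (by norm_num : (2:ℤ) ≠ 0)).mp hN
      have ht' := ih c1' d1 c2' d2 c3' d3 c4' d4 heq' hN'
      have hte : ((c1'+d1)*(c3'-d3) - (c1'-d1)*(c3'+d3) - (c1'-d1)*(c3'-d3) - (c1'+d1)*(c3'+d3))
          + ((c2'+d2)*(c4'-d4) - (c2'-d2)*(c4'+d4) - (c2'-d2)*(c4'-d4) - (c2'+d2)*(c4'+d4))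
          = 2 * ((d1*c3' - c1'*d3 - c1'*c3' - d1*d3) + (d2*c4' - c2'*d4 - c2'*c4' - d2*d4)) := by ring
      rw [hte]
      have : (2:ℤ)^(m+1+1) = 2 * 2^(m+1) := by ring
      rw [this]
      exact mul_dvd_mul_left 2 ht'

open Complex ComplexConjugate

/-- A Gaussian integer: a complex number whose real and imaginary parts are integers. -/
def IsGaussianInt (z : ℂ) : Prop := ∃ a b : ℤ, z = (a : ℂ) + (b : ℂ) * Complex.I

theorem stmt_4 (z₁ z₂ z₃ z₄ : ℂ)
    (h₁ : IsGaussianInt z₁) (h₂ : IsGaussianInt z₂)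
    (h₃ : IsGaussianInt z₃) (h₄ : IsGaussianInt z₄)
    (heq : Complex.normSq z₁ + Complex.normSq z₂ = Complex.normSq z₃ + Complex.normSq z₄)
    (k : ℕ)
    (hdvd : ∃ N : ℤ, (N : ℝ) = Complex.normSq z₁ + Complex.normSq z₂ ∧ (2 : ℤ) ^ k ∣ N) :
    ∃ t : ℤ, (t : ℝ) = (z₁ * conj z₃ + z₂ * conj z₄).im - (z₁ * conj z₃ + z₂ * conj z₄).re ∧
      (2 : ℤ) ^ k ∣ t := by
  obtain ⟨a1, b1, rfl⟩ := h₁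
  obtain ⟨a2, b2, rfl⟩ := h₂
  obtain ⟨a3, b3, rfl⟩ := h₃
  obtain ⟨a4, b4, rfl⟩ := h₄
  obtain ⟨N, hNr, hNd⟩ := hdvd
  have hns : ∀ a b : ℤ, Complex.normSq ((a:ℂ) + (b:ℂ)*Complex.I) = ((a^2 + b^2 : ℤ) : ℝ) := by
    intro a b
    simp [Complex.normSq_apply]
    push_cast
    ring
  have hN : N = a1^2+b1^2+a2^2+b2^2 := by
    have : (N : ℝ) = ((a1^2+b1^2+a2^2+b2^2 : ℤ) : ℝ) := by
      rw [hNr, hns, hns]; push_cast; ring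
    exact_mod_cast this
  have heqZ : a1^2+b1^2+a2^2+b2^2 = a3^2+b3^2+a4^2+b4^2 := by
    rw [hns, hns, hns, hns] at heq
    have := (by exact_mod_cast heq : a1^2+b1^2+(a2^2+b2^2) = a3^2+b3^2+(a4^2+b4^2))
    omega
  refine ⟨(b1*a3 - a1*b3 - a1*a3 - b1*b3) + (b2*a4 - a2*b4 - a2*a4 - b2*b4), ?_, ?_⟩
  · simp [Complex.add_re, Complex.add_im, Complex.mul_re, Complex.mul_im]
    push_cast
    ring
  · exact intkey k a1 b1 a2 b2 a3 b3 a4 b4 heqZ (hN ▸ hNd)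
end

section
/- Let $u, v$ be real numbers with $u^2 + v^2 = 1$. Define $G(u,v)$ to be the infimum, over all Gaussian integers $z_1, z_2, z_3, z_4$, not all zero, satisfying $|z_1|^2 + |z_2|^2 = |z_3|^2 + |z_4|^2$, of the quantity $2\,\big((|z_1|^2 + |z_2|^2)(u - v) - \big(\mathrm{Im}(z_1\overline{z_3} + z_2\overline{z_4}) - \mathrm{Re}(z_1\overline{z_3} + z_2\overline{z_4})\big)\big)^2$. Then $G(u,v) \leq 1/2$, and $G(u,v) = 1/2$ if and only if $u - v = 1/2$ or $u - v = -1/2$. -/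
open Complex ComplexConjugate

lemma zmod2lemma : ∀ a1 b1 a2 b2 a3 b3 a4 b4 : ZMod 2,
    a1^2+b1^2+a2^2+b2^2 = 0 → a3^2+b3^2+a4^2+b4^2 = 0 →
    (b1*a3 - a1*b3 + b2*a4 - a2*b4) - (a1*a3+b1*b3+a2*a4+b2*b4) = 0 := by decide

lemma zmod4lemma : ∀ a b c d : ZMod 4, a^2+b^2+c^2+d^2 = 0 →
    2*(a+b) = 0 ∧ 2*(c+d) = 0 := by decide

lemma int_zmod_dvd {m : ℕ} {x : ℤ} (h : (x : ZMod m) = 0) : (m:ℤ) ∣ x :=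
  (ZMod.intCast_zmod_eq_zero_iff_dvd x m).mp h

lemma keyNat : ∀ n : ℕ, ∀ a1 b1 a2 b2 a3 b3 a4 b4 : ℤ,
    a1^2+b1^2+a2^2+b2^2 = n → a3^2+b3^2+a4^2+b4^2 = n →
    2*((b1*a3 - a1*b3 + b2*a4 - a2*b4) - (a1*a3+b1*b3+a2*a4+b2*b4)) = n →
    n = 0 := by
  intro n
  induction n using Nat.strong_induction_on with
  | _ n IH =>
  intro a1 b1 a2 b2 a3 b3 a4 b4 h1 h2 h3
  rcases Nat.eq_zero_or_pos n with h0 | hpos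
  · exact h0
  exfalso
  -- n is even
  have hK2 : (2:ℤ) ∣ ((b1*a3 - a1*b3 + b2*a4 - a2*b4) - (a1*a3+b1*b3+a2*a4+b2*b4)) := by
    apply int_zmod_dvd
    have e1 : ((a1:ZMod 2))^2+(b1:ZMod 2)^2+(a2:ZMod 2)^2+(b2:ZMod 2)^2 = 0 := by
      have : ((2:ℤ)) ∣ (a1^2+b1^2+a2^2+b2^2) := by
        refine ⟨((b1*a3 - a1*b3 + b2*a4 - a2*b4) - (a1*a3+b1*b3+a2*a4+b2*b4)), ?_⟩
        omega
      have := (ZMod.intCast_zmod_eq_zero_iff_dvd (a1^2+b1^2+a2^2+b2^2) 2).mpr this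
      push_cast at this
      convert this using 1
    have e2 : ((a3:ZMod 2))^2+(b3:ZMod 2)^2+(a4:ZMod 2)^2+(b4:ZMod 2)^2 = 0 := by
      have : ((2:ℤ)) ∣ (a3^2+b3^2+a4^2+b4^2) := by
        refine ⟨((b1*a3 - a1*b3 + b2*a4 - a2*b4) - (a1*a3+b1*b3+a2*a4+b2*b4)), ?_⟩
        omega
      have := (ZMod.intCast_zmod_eq_zero_iff_dvd (a3^2+b3^2+a4^2+b4^2) 2).mpr this
      push_cast at this
      convert this using 1
    have := zmod2lemma a1 b1 a2 b2 a3 b3 a4 b4 e1 e2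
    push_cast
    convert this using 1
  -- hence 4 ∣ n
  have h4n : (4:ℤ) ∣ (a1^2+b1^2+a2^2+b2^2) := by
    obtain ⟨K', hK'⟩ := hK2
    exact ⟨K', by omega⟩
  have h4n' : (4:ℤ) ∣ (a3^2+b3^2+a4^2+b4^2) := by omega
  -- each pair has even coordinates sum
  have div12 : (4:ℤ) ∣ 2*(a1+b1) ∧ (4:ℤ) ∣ 2*(a2+b2) := by
    have e1 : ((a1:ZMod 4))^2+(b1:ZMod 4)^2+(a2:ZMod 4)^2+(b2:ZMod 4)^2 = 0 := by
      have := (ZMod.intCast_zmod_eq_zero_iff_dvd (a1^2+b1^2+a2^2+b2^2) 4).mpr h4n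
      push_cast at this
      convert this using 1
    obtain ⟨p, q⟩ := zmod4lemma (a1 : ZMod 4) b1 a2 b2 e1
    constructor
    · apply int_zmod_dvd; push_cast; convert p using 1
    · apply int_zmod_dvd; push_cast; convert q using 1
  have div34 : (4:ℤ) ∣ 2*(a3+b3) ∧ (4:ℤ) ∣ 2*(a4+b4) := by
    have e1 : ((a3:ZMod 4))^2+(b3:ZMod 4)^2+(a4:ZMod 4)^2+(b4:ZMod 4)^2 = 0 := by
      have := (ZMod.intCast_zmod_eq_zero_iff_dvd (a3^2+b3^2+a4^2+b4^2) 4).mpr h4n'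
      push_cast at this
      convert this using 1
    obtain ⟨p, q⟩ := zmod4lemma (a3 : ZMod 4) b3 a4 b4 e1
    constructor
    · apply int_zmod_dvd; push_cast; convert p using 1
    · apply int_zmod_dvd; push_cast; convert q using 1
  obtain ⟨hd1, hd2⟩ := div12
  obtain ⟨hd3, hd4⟩ := div34
  obtain ⟨c1, hc1⟩ : ∃ c, a1 + b1 = 2*c := ⟨(a1+b1)/2, by omega⟩
  obtain ⟨c2, hc2⟩ : ∃ c, a2 + b2 = 2*c := ⟨(a2+b2)/2, by omega⟩
  obtain ⟨c3, hc3⟩ : ∃ c, a3 + b3 = 2*c := ⟨(a3+b3)/2, by omega⟩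
  obtain ⟨c4, hc4⟩ : ∃ c, a4 + b4 = 2*c := ⟨(a4+b4)/2, by omega⟩
  set d1 := c1 - a1 with hdd1
  set d2 := c2 - a2 with hdd2
  set d3 := c3 - a3 with hdd3
  set d4 := c4 - a4 with hdd4
  have ra1 : a1 = c1 - d1 := by omega
  have rb1 : b1 = c1 + d1 := by omega
  have ra2 : a2 = c2 - d2 := by omega
  have rb2 : b2 = c2 + d2 := by omega
  have ra3 : a3 = c3 - d3 := by omega
  have rb3 : b3 = c3 + d3 := by omega
  have ra4 : a4 = c4 - d4 := by omega
  have rb4 : b4 = c4 + d4 := by omega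
  have hn2 : 2 ∣ n := by
    have : (2:ℤ) ∣ (n:ℤ) := ⟨_, h3.symm⟩
    exact_mod_cast this
  obtain ⟨m, hm⟩ := hn2
  have hmn : (n:ℤ) = 2*(m:ℤ) := by exact_mod_cast hm
  have g1 : c1^2+d1^2+c2^2+d2^2 = (m:ℤ) := by
    have : a1^2+b1^2+a2^2+b2^2 = 2*(c1^2+d1^2+c2^2+d2^2) := by
      rw [ra1, rb1, ra2, rb2]; ring
    linarith [h1, this, hmn]
  have g2 : c3^2+d3^2+c4^2+d4^2 = (m:ℤ) := by
    have : a3^2+b3^2+a4^2+b4^2 = 2*(c3^2+d3^2+c4^2+d4^2) := by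
      rw [ra3, rb3, ra4, rb4]; ring
    linarith [h2, this, hmn]
  have g3 : 2*((d1*c3 - c1*d3 + d2*c4 - c2*d4) - (c1*c3+d1*d3+c2*c4+d2*d4)) = (m:ℤ) := by
    have : ((b1*a3 - a1*b3 + b2*a4 - a2*b4) - (a1*a3+b1*b3+a2*a4+b2*b4))
        = 2*((d1*c3 - c1*d3 + d2*c4 - c2*d4) - (c1*c3+d1*d3+c2*c4+d2*d4)) := by
      rw [ra1, rb1, ra2, rb2, ra3, rb3, ra4, rb4]; ring
    linarith [h3, this, hmn]
  have hmlt : m < n := by omega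
  have := IH m hmlt c1 d1 c2 d2 c3 d3 c4 d4 g1 g2 g3
  omega

lemma keyInt (a1 b1 a2 b2 a3 b3 a4 b4 : ℤ)
    (h1 : a3^2+b3^2+a4^2+b4^2 = a1^2+b1^2+a2^2+b2^2)
    (h2 : 2*((b1*a3 - a1*b3 + b2*a4 - a2*b4) - (a1*a3+b1*b3+a2*a4+b2*b4))
      = a1^2+b1^2+a2^2+b2^2) :
    a1^2+b1^2+a2^2+b2^2 = 0 := by
  have hNn : 0 ≤ a1^2+b1^2+a2^2+b2^2 := by positivity
  set n := (a1^2+b1^2+a2^2+b2^2).toNat with hndef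
  have hn : ((n:ℤ)) = a1^2+b1^2+a2^2+b2^2 := Int.toNat_of_nonneg hNn
  have := keyNat n a1 b1 a2 b2 a3 b3 a4 b4 hn.symm (by omega) (by omega)
  omega

lemma normSq_int (a b : ℤ) :
    Complex.normSq ((a:ℂ) + (b:ℂ)*Complex.I) = ((a^2+b^2 : ℤ) : ℝ) := by
  simp [Complex.normSq_apply]
  push_cast
  ring

lemma imre_int (a1 b1 a2 b2 a3 b3 a4 b4 : ℤ) :
    ((((a1:ℂ)+(b1:ℂ)*Complex.I) * conj ((a3:ℂ)+(b3:ℂ)*Complex.I)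
      + ((a2:ℂ)+(b2:ℂ)*Complex.I) * conj ((a4:ℂ)+(b4:ℂ)*Complex.I)).im
    - (((a1:ℂ)+(b1:ℂ)*Complex.I) * conj ((a3:ℂ)+(b3:ℂ)*Complex.I)
      + ((a2:ℂ)+(b2:ℂ)*Complex.I) * conj ((a4:ℂ)+(b4:ℂ)*Complex.I)).re)
    = (((b1*a3 - a1*b3 + b2*a4 - a2*b4) - (a1*a3+b1*b3+a2*a4+b2*b4) : ℤ) : ℝ) := by
  simp [Complex.add_im, Complex.add_re, Complex.mul_re, Complex.mul_im]
  push_cast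
  ring

theorem stmt_6 (u v : ℝ) (huv : u ^ 2 + v ^ 2 = 1) :
    sInf {y : ℝ | ∃ z₁ z₂ z₃ z₄ : ℂ,
        IsGaussianInt z₁ ∧ IsGaussianInt z₂ ∧ IsGaussianInt z₃ ∧ IsGaussianInt z₄ ∧
        ¬ (z₁ = 0 ∧ z₂ = 0 ∧ z₃ = 0 ∧ z₄ = 0) ∧
        Complex.normSq z₁ + Complex.normSq z₂ = Complex.normSq z₃ + Complex.normSq z₄ ∧
        y = 2 * ((Complex.normSq z₁ + Complex.normSq z₂) * (u - v) -
          ((z₁ * conj z₃ + z₂ * conj z₄).im - (z₁ * conj z₃ + z₂ * conj z₄).re)) ^ 2} ≤ 1 / 2 ∧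
    (sInf {y : ℝ | ∃ z₁ z₂ z₃ z₄ : ℂ,
        IsGaussianInt z₁ ∧ IsGaussianInt z₂ ∧ IsGaussianInt z₃ ∧ IsGaussianInt z₄ ∧
        ¬ (z₁ = 0 ∧ z₂ = 0 ∧ z₃ = 0 ∧ z₄ = 0) ∧
        Complex.normSq z₁ + Complex.normSq z₂ = Complex.normSq z₃ + Complex.normSq z₄ ∧
        y = 2 * ((Complex.normSq z₁ + Complex.normSq z₂) * (u - v) -
          ((z₁ * conj z₃ + z₂ * conj z₄).im - (z₁ * conj z₃ + z₂ * conj z₄).re)) ^ 2} = 1 / 2 ↔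
      (u - v = 1 / 2 ∨ u - v = -(1 / 2))) := by
  have ht2 : (u - v)^2 ≤ 2 := by nlinarith [sq_nonneg (u+v)]
  set S := {y : ℝ | ∃ z₁ z₂ z₃ z₄ : ℂ,
        IsGaussianInt z₁ ∧ IsGaussianInt z₂ ∧ IsGaussianInt z₃ ∧ IsGaussianInt z₄ ∧
        ¬ (z₁ = 0 ∧ z₂ = 0 ∧ z₃ = 0 ∧ z₄ = 0) ∧
        Complex.normSq z₁ + Complex.normSq z₂ = Complex.normSq z₃ + Complex.normSq z₄ ∧
        y = 2 * ((Complex.normSq z₁ + Complex.normSq z₂) * (u - v) -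
          ((z₁ * conj z₃ + z₂ * conj z₄).im - (z₁ * conj z₃ + z₂ * conj z₄).re)) ^ 2} with hSdef
  have hmem : ∀ k : ℝ, (k = -1 ∨ k = 0 ∨ k = 1) → 2*((u-v) - k)^2 ∈ S := by
    intro k hk
    rcases hk with rfl | rfl | rfl
    · refine ⟨1, 0, 1, 0, ⟨1, 0, by norm_num⟩, ⟨0, 0, by norm_num⟩,
        ⟨1, 0, by norm_num⟩, ⟨0, 0, by norm_num⟩, by simp, by simp, ?_⟩
      simp
    · refine ⟨1, 0, 0, 1, ⟨1, 0, by norm_num⟩, ⟨0, 0, by norm_num⟩,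
        ⟨0, 0, by norm_num⟩, ⟨1, 0, by norm_num⟩, by simp, by simp, ?_⟩
      simp
    · refine ⟨1, 0, -1, 0, ⟨1, 0, by norm_num⟩, ⟨0, 0, by norm_num⟩,
        ⟨-1, 0, by push_cast; ring⟩, ⟨0, 0, by norm_num⟩, by simp, by simp, ?_⟩
      simp
  have hbdd : BddBelow S := by
    refine ⟨0, ?_⟩
    rintro y ⟨z1, z2, z3, z4, _, _, _, _, _, _, rfl⟩
    positivity
  have hne : S.Nonempty := ⟨_, hmem 0 (Or.inr (Or.inl rfl))⟩
  have hhalf : sInf S ≤ 1/2 := by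
    rcases le_or_gt (u - v) (-(1/2)) with h | h
    · refine (csInf_le hbdd (hmem (-1) (Or.inl rfl))).trans ?_
      nlinarith
    rcases le_or_gt (u - v) (1/2) with h' | h'
    · refine (csInf_le hbdd (hmem 0 (Or.inr (Or.inl rfl)))).trans ?_
      nlinarith
    · refine (csInf_le hbdd (hmem 1 (Or.inr (Or.inr rfl)))).trans ?_
      nlinarith
  refine ⟨hhalf, ?_, ?_⟩
  · -- sInf = 1/2 → u - v = ± 1/2
    intro hinf
    by_contra hcon
    push_neg at hcon
    obtain ⟨hc1, hc2⟩ := hcon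
    have : sInf S < 1/2 := by
      rcases lt_or_ge (u - v) (-(1/2)) with h | h
      · refine lt_of_le_of_lt (csInf_le hbdd (hmem (-1) (Or.inl rfl))) ?_
        nlinarith
      rcases le_or_gt (u - v) (1/2) with h' | h'
      · have hl : -(1/2) < u - v := lt_of_le_of_ne h (Ne.symm hc2)
        have hr : u - v < 1/2 := lt_of_le_of_ne h' hc1
        refine lt_of_le_of_lt (csInf_le hbdd (hmem 0 (Or.inr (Or.inl rfl)))) ?_
        nlinarith
      · refine lt_of_le_of_lt (csInf_le hbdd (hmem 1 (Or.inr (Or.inr rfl)))) ?_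
        nlinarith
    linarith [hinf]
  · -- u - v = ± 1/2 → sInf = 1/2
    intro h
    refine le_antisymm hhalf ?_
    apply le_csInf hne
    rintro y ⟨z1, z2, z3, z4, g1, g2, g3, g4, hnz, hsum, hyeq⟩
    obtain ⟨a1, b1, e1⟩ := g1
    obtain ⟨a2, b2, e2⟩ := g2
    obtain ⟨a3, b3, e3⟩ := g3
    obtain ⟨a4, b4, e4⟩ := g4
    rw [e1, e2, e3, e4] at hsum hyeq
    simp only [normSq_int, imre_int] at hsum hyeq
    have hZ : a1^2+b1^2+a2^2+b2^2 = a3^2+b3^2+a4^2+b4^2 := by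
      have h' : a1 ^ 2 + b1 ^ 2 + (a2 ^ 2 + b2 ^ 2) = a3 ^ 2 + b3 ^ 2 + (a4 ^ 2 + b4 ^ 2) := by
        exact_mod_cast hsum
      linarith
    obtain ⟨K, hKdef⟩ : ∃ K : ℤ,
        K = (b1*a3 - a1*b3 + b2*a4 - a2*b4) - (a1*a3+b1*b3+a2*a4+b2*b4) := ⟨_, rfl⟩
    rw [← hKdef] at hyeq
    have sqz : ∀ x : ℤ, x^2 = 0 → x = 0 := fun x hx =>
      (pow_eq_zero_iff (by norm_num : (2:ℕ) ≠ 0)).mp hx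
    -- all-zero contradiction helper
    have hzero : ¬ (a1^2+b1^2+a2^2+b2^2 = 0) := by
      intro h0
      have h0' : a3^2+b3^2+a4^2+b4^2 = 0 := by omega
      have za1 : a1 = 0 := sqz a1 (by linarith [sq_nonneg a1, sq_nonneg b1, sq_nonneg a2, sq_nonneg b2])
      have zb1 : b1 = 0 := sqz b1 (by linarith [sq_nonneg a1, sq_nonneg b1, sq_nonneg a2, sq_nonneg b2])
      have za2 : a2 = 0 := sqz a2 (by linarith [sq_nonneg a1, sq_nonneg b1, sq_nonneg a2, sq_nonneg b2])
      have zb2 : b2 = 0 := sqz b2 (by linarith [sq_nonneg a1, sq_nonneg b1, sq_nonneg a2, sq_nonneg b2])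
      have za3 : a3 = 0 := sqz a3 (by linarith [sq_nonneg a3, sq_nonneg b3, sq_nonneg a4, sq_nonneg b4])
      have zb3 : b3 = 0 := sqz b3 (by linarith [sq_nonneg a3, sq_nonneg b3, sq_nonneg a4, sq_nonneg b4])
      have za4 : a4 = 0 := sqz a4 (by linarith [sq_nonneg a3, sq_nonneg b3, sq_nonneg a4, sq_nonneg b4])
      have zb4 : b4 = 0 := sqz b4 (by linarith [sq_nonneg a3, sq_nonneg b3, sq_nonneg a4, sq_nonneg b4])
      exact hnz ⟨by simp [e1, za1, zb1], by simp [e2, za2, zb2],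
        by simp [e3, za3, zb3], by simp [e4, za4, zb4]⟩
    rcases h with h | h
    · -- u - v = 1/2 : need N ≠ 2K
      have hne0 : a1^2+b1^2+a2^2+b2^2 - 2*K ≠ 0 := by
        intro hc
        refine hzero (keyInt a1 b1 a2 b2 a3 b3 a4 b4 hZ.symm ?_)
        rw [hKdef] at hc
        omega
      have h1le : (1:ℤ) ≤ (a1^2+b1^2+a2^2+b2^2 - 2*K)^2 := by
        have habs : 1 ≤ |a1^2+b1^2+a2^2+b2^2 - 2*K| := Int.one_le_abs hne0
        nlinarith [_root_.sq_abs (a1^2+b1^2+a2^2+b2^2 - 2*K),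
          abs_nonneg (a1^2+b1^2+a2^2+b2^2 - 2*K)]
      have hkey : (1:ℝ) ≤ ((a1^2+b1^2+a2^2+b2^2 - 2*K : ℤ) : ℝ)^2 := by exact_mod_cast h1le
      have expand : 2 * ((((a1^2+b1^2 : ℤ):ℝ) + ((a2^2+b2^2 : ℤ):ℝ)) * (1/2) - ((K : ℤ):ℝ))^2
          = ((a1^2+b1^2+a2^2+b2^2 - 2*K : ℤ):ℝ)^2 / 2 := by
        push_cast
        ring
      rw [hyeq, h, expand]
      linarith [hkey]
    · -- u - v = -(1/2) : need N ≠ -2K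
      have hne0 : a1^2+b1^2+a2^2+b2^2 + 2*K ≠ 0 := by
        intro hc
        refine hzero (keyInt a1 b1 a2 b2 (-a3) (-b3) (-a4) (-b4) (by linarith [hZ]) ?_)
        linear_combination 2*hKdef - hc
      have h1le : (1:ℤ) ≤ (a1^2+b1^2+a2^2+b2^2 + 2*K)^2 := by
        have habs : 1 ≤ |a1^2+b1^2+a2^2+b2^2 + 2*K| := Int.one_le_abs hne0
        nlinarith [_root_.sq_abs (a1^2+b1^2+a2^2+b2^2 + 2*K),
          abs_nonneg (a1^2+b1^2+a2^2+b2^2 + 2*K)]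
      have hkey : (1:ℝ) ≤ ((a1^2+b1^2+a2^2+b2^2 + 2*K : ℤ) : ℝ)^2 := by exact_mod_cast h1le
      have expand : 2 * ((((a1^2+b1^2 : ℤ):ℝ) + ((a2^2+b2^2 : ℤ):ℝ)) * (-(1/2)) - ((K : ℤ):ℝ))^2
          = ((a1^2+b1^2+a2^2+b2^2 + 2*K : ℤ):ℝ)^2 / 2 := by
        push_cast
        ring
      rw [hyeq, h, expand]
      linarith [hkey]
end

section
/- Let $r = \frac{1 + \sqrt{7}}{4} + i\,\frac{-1 + \sqrt{7}}{4}$, and let $z_1, z_2, z_3, z_4$ be Gaussian integers with $|z_1|^2 + |z_2|^2 \neq |z_3|^2 + |z_4|^2$. Define $D = r(|z_3|^2 + |z_4|^2) - i\overline{r}(|z_1|^2 + |z_2|^2) + (z_1\overline{z_3} + z_2\overline{z_4}) - i(\overline{z_1} z_3 + \overline{z_2} z_4)$. Then $|D|^2 \geq 7/8$. -/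
open Complex ComplexConjugate

/-- The optimized design coefficient `r = (1+√7)/4 + i(-1+√7)/4`. -/
noncomputable def rOpt : ℂ :=
  (((1 + Real.sqrt 7) / 4 : ℝ) : ℂ) + (((-1 + Real.sqrt 7) / 4 : ℝ) : ℂ) * Complex.I

/-!
The real functional `u ↦ re u + im u` annihilates the cross terms `w - i·conj w` and takes the
value `(√7/2)(|z₃|² + |z₄|² - |z₁|² - |z₂|²)` on `D`. The norm difference is a nonzero integer,
and `|u|² ≥ (re u + im u)² / 2` then gives `|D|² ≥ 7/8`.
-/

lemma IsGaussianInt.exists_normSq_eq_intCast {z : ℂ} (hz : IsGaussianInt z) :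
    ∃ n : ℤ, normSq z = n := by
  obtain ⟨a, b, rfl⟩ := hz
  exact ⟨a ^ 2 + b ^ 2, by simp [normSq_apply]; ring⟩

lemma one_le_sq_sub_of_isGaussianInt {z₁ z₂ z₃ z₄ : ℂ}
    (h₁ : IsGaussianInt z₁) (h₂ : IsGaussianInt z₂) (h₃ : IsGaussianInt z₃)
    (h₄ : IsGaussianInt z₄) (hne : normSq z₁ + normSq z₂ ≠ normSq z₃ + normSq z₄) :
    1 ≤ (normSq z₃ + normSq z₄ - (normSq z₁ + normSq z₂)) ^ 2 := by
  obtain ⟨n₁, hn₁⟩ := h₁.exists_normSq_eq_intCast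
  obtain ⟨n₂, hn₂⟩ := h₂.exists_normSq_eq_intCast
  obtain ⟨n₃, hn₃⟩ := h₃.exists_normSq_eq_intCast
  obtain ⟨n₄, hn₄⟩ := h₄.exists_normSq_eq_intCast
  rw [hn₁, hn₂, hn₃, hn₄] at hne ⊢
  have hsub : n₃ + n₄ - (n₁ + n₂) ≠ 0 := fun h ↦ hne (by exact_mod_cast (sub_eq_zero.mp h).symm)
  exact_mod_cast (one_le_sq_iff_one_le_abs _).mpr (Int.one_le_abs hsub)

lemma sq_re_add_im_le_two_mul_normSq (u : ℂ) : (u.re + u.im) ^ 2 ≤ 2 * normSq u := by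
  rw [normSq_apply]
  nlinarith [sq_nonneg (u.re - u.im)]

lemma re_add_im_mul_sub_I_mul_conj_mul_add_sub_I_mul_conj (r w : ℂ) (a b : ℝ) :
    (r * a - I * conj r * b + w - I * conj w).re + (r * a - I * conj r * b + w - I * conj w).im =
      (r.re + r.im) * (a - b) := by
  simp only [sub_re, sub_im, add_re, add_im, mul_re, mul_im, I_re, I_im, conj_re, conj_im,
    ofReal_re, ofReal_im]
  ring

lemma rOpt_re_add_im : rOpt.re + rOpt.im = Real.sqrt 7 / 2 := by
  simp only [rOpt, add_re, add_im, mul_re, mul_im, I_re, I_im, ofReal_re, ofReal_im]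
  ring

theorem stmt_10 (z₁ z₂ z₃ z₄ : ℂ)
    (h₁ : IsGaussianInt z₁) (h₂ : IsGaussianInt z₂)
    (h₃ : IsGaussianInt z₃) (h₄ : IsGaussianInt z₄)
    (hne : Complex.normSq z₁ + Complex.normSq z₂ ≠ Complex.normSq z₃ + Complex.normSq z₄) :
    ‖
        (rOpt * ((Complex.normSq z₃ : ℂ) + (Complex.normSq z₄ : ℂ)) -
          Complex.I * conj rOpt * ((Complex.normSq z₁ : ℂ) + (Complex.normSq z₂ : ℂ)) +
          (z₁ * conj z₃ + z₂ * conj z₄) -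
          Complex.I * (conj z₁ * z₃ + conj z₂ * z₄))‖ ^ 2 ≥ 7 / 8 := by
  have hab := one_le_sq_sub_of_isGaussianInt h₁ h₂ h₃ h₄ hne
  set a := normSq z₃ + normSq z₄
  set b := normSq z₁ + normSq z₂
  set w := z₁ * conj z₃ + z₂ * conj z₄
  have hw : conj z₁ * z₃ + conj z₂ * z₄ = conj w := by simp [w, mul_comm]
  rw [← ofReal_add, ← ofReal_add, hw]
  set D := rOpt * a - I * conj rOpt * b + w - I * conj w
  have hD : D.re + D.im = Real.sqrt 7 / 2 * (a - b) := by
    rw [re_add_im_mul_sub_I_mul_conj_mul_add_sub_I_mul_conj, rOpt_re_add_im]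
  have h7 : Real.sqrt 7 ^ 2 = 7 := Real.sq_sqrt (by norm_num)
  calc ‖D‖ ^ 2 = normSq D := Complex.sq_norm D
    _ ≥ (D.re + D.im) ^ 2 / 2 := by linarith [sq_re_add_im_le_two_mul_normSq D]
    _ = 7 / 8 * (a - b) ^ 2 := by rw [hD]; linear_combination (a - b) ^ 2 / 8 * h7
    _ ≥ 7 / 8 := by linarith
end

section
/- Let $r = \frac{1 + \sqrt{7}}{4} + i\,\frac{-1 + \sqrt{7}}{4}$, and let $z_1, z_2, z_3, z_4$ be Gaussian integers, not all zero, with $|z_1|^2 + |z_2|^2 = |z_3|^2 + |z_4|^2$. Define $D = r(|z_3|^2 + |z_4|^2) - i\overline{r}(|z_1|^2 + |z_2|^2) + (z_1\overline{z_3} + z_2\overline{z_4}) - i(\overline{z_1} z_3 + \overline{z_2} z_4)$. Then $|D|^2 \geq 1/2$. -/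
open Complex ComplexConjugate

/-!
Write `S = z₁ z̄₃ + z₂ z̄₄` and `N` for the common value of the two norm sums. Since
`r - i r̄ = (1 - i)/2` and `S - i S̄ = (1 - i) Re((1 + i) S)`, we get `D = (1 - i) q / 2` with
`q = N + 2 Re((1 + i) S)`, so `|D|² = q² / 2`. For Gaussian integers `q` is an integer, and it
remains to see `q ≠ 0`. This is a 2-adic descent: `q = 0` forces `2 ∣ N`, then by parity `4 ∣ N`,
which makes `1 + i` divide every `zₖ`; dividing all four by `1 + i` halves both `N` and `q`.
-/

local notation "ℤ[i]" => GaussianInt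

theorem rOpt_sub_I_mul_conj : rOpt - I * conj rOpt = (1 - I) / 2 := by
  simp only [rOpt, map_add, map_mul, conj_ofReal, conj_I]
  apply Complex.ext <;> simp <;> ring

theorem sub_I_mul_conj (S : ℂ) : S - I * conj S = (1 - I) * ((1 + I) * S).re := by
  apply Complex.ext <;> simp

theorem sq_norm_D {z₁ z₂ z₃ z₄ : ℂ} (heq : normSq z₁ + normSq z₂ = normSq z₃ + normSq z₄) :
    ‖(rOpt * ((normSq z₃ : ℂ) + (normSq z₄ : ℂ)) -
          I * conj rOpt * ((normSq z₁ : ℂ) + (normSq z₂ : ℂ)) +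
          (z₁ * conj z₃ + z₂ * conj z₄) - I * (conj z₁ * z₃ + conj z₂ * z₄))‖ ^ 2
      = (normSq z₁ + normSq z₂ + 2 * ((1 + I) * (z₁ * conj z₃ + z₂ * conj z₄)).re) ^ 2 / 2 := by
  set S := z₁ * conj z₃ + z₂ * conj z₄
  have hS : conj z₁ * z₃ + conj z₂ * z₄ = conj S := by simp only [S, map_add, map_mul, conj_conj]
  have hN : (normSq z₃ : ℂ) + (normSq z₄ : ℂ) = ((normSq z₁ + normSq z₂ : ℝ) : ℂ) := by
    rw [heq, ofReal_add]
  have hD : rOpt * ((normSq z₃ : ℂ) + (normSq z₄ : ℂ)) -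
        I * conj rOpt * ((normSq z₁ : ℂ) + (normSq z₂ : ℂ)) + S - I * conj S
      = (1 - I) / 2 * ((normSq z₁ + normSq z₂ + 2 * ((1 + I) * S).re : ℝ) : ℂ) := by
    rw [hN]
    push_cast
    linear_combination ((normSq z₁ : ℂ) + normSq z₂) * rOpt_sub_I_mul_conj + sub_I_mul_conj S
  have hnorm : ‖(1 - I) / 2‖ ^ 2 = 1 / 2 := by
    rw [Complex.sq_norm, Complex.normSq_div, Complex.normSq_apply]
    norm_num
  rw [hS, hD, norm_mul, mul_pow, hnorm, Complex.norm_real, Real.norm_eq_abs, sq_abs]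
  ring

theorem IsGaussianInt.exists_toComplex_eq {z : ℂ} (h : IsGaussianInt z) :
    ∃ w : ℤ[i], (w : ℂ) = z := by
  obtain ⟨a, b, rfl⟩ := h
  exact ⟨⟨a, b⟩, GaussianInt.toComplex_def' a b⟩

namespace GaussianInt

/-- The integer `q` with `D = (1 - i) q / 2`; here `⟨1, 1⟩ = 1 + i`. -/
def dNumerator (z₁ z₂ z₃ z₄ : ℤ[i]) : ℤ :=
  z₁.norm + z₂.norm + 2 * (⟨1, 1⟩ * (z₁ * star z₃ + z₂ * star z₄)).re

theorem toComplex_dNumerator (z₁ z₂ z₃ z₄ : ℤ[i]) :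
    (dNumerator z₁ z₂ z₃ z₄ : ℝ) = normSq (z₁ : ℂ) + normSq (z₂ : ℂ) +
      2 * ((1 + I) * (z₁ * conj (z₃ : ℂ) + z₂ * conj (z₄ : ℂ))).re := by
  have h : ((⟨1, 1⟩ * (z₁ * star z₃ + z₂ * star z₄) : ℤ[i]) : ℂ)
      = (1 + I) * (z₁ * conj (z₃ : ℂ) + z₂ * conj (z₄ : ℂ)) := by
    simp [toComplex_star, toComplex_def']
  rw [dNumerator]
  push_cast
  rw [intCast_real_norm, intCast_real_norm, intCast_re, h]

theorem dNumerator_mul (c z₁ z₂ z₃ z₄ : ℤ[i]) :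
    dNumerator (c * z₁) (c * z₂) (c * z₃) (c * z₄) = c.norm * dNumerator z₁ z₂ z₃ z₄ := by
  have hS : c * z₁ * star (c * z₃) + c * z₂ * star (c * z₄)
      = (c.norm : ℤ[i]) * (z₁ * star z₃ + z₂ * star z₄) := by
    rw [Zsqrtd.norm_eq_mul_conj, star_mul', star_mul']
    ring
  rw [dNumerator, dNumerator, hS, mul_left_comm, Zsqrtd.re_smul, Zsqrtd.norm_mul, Zsqrtd.norm_mul]
  ring

theorem norm_one_add_I : (⟨1, 1⟩ : ℤ[i]).norm = 2 := rfl

theorem norm_add_norm_eq_zero {x y : ℤ[i]} : x.norm + y.norm = 0 ↔ x = 0 ∧ y = 0 := by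
  rw [add_eq_zero_iff_of_nonneg (norm_nonneg x) (norm_nonneg y), norm_eq_zero, norm_eq_zero]

theorem one_add_I_dvd_of_two_dvd {z : ℤ[i]} (h : 2 ∣ z.re + z.im) : (⟨1, 1⟩ : ℤ[i]) ∣ z := by
  obtain ⟨k, hk⟩ := h
  exact ⟨⟨k, k - z.re⟩, by ext <;> simp; omega⟩

theorem two_dvd_re_one_add_I_mul {z₁ z₂ z₃ z₄ : ℤ[i]} (h₁₂ : 2 ∣ z₁.norm + z₂.norm)
    (h₃₄ : 2 ∣ z₃.norm + z₄.norm) :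
    2 ∣ (⟨1, 1⟩ * (z₁ * star z₃ + z₂ * star z₄) : ℤ[i]).re := by
  have key : ∀ a b c d e f g h : ZMod 2, a * a + b * b + c * c + d * d = 0 →
      e * e + f * f + g * g + h * h = 0 →
      a * e + b * f + c * g + d * h - (b * e - a * f + d * g - c * h) = 0 := by decide
  have hdvd (x : ℤ) : 2 ∣ x ↔ (x : ZMod 2) = 0 := (ZMod.intCast_zmod_eq_zero_iff_dvd x 2).symm
  rw [hdvd, Zsqrtd.norm_def, Zsqrtd.norm_def] at h₁₂ h₃₄
  rw [hdvd]
  push_cast at h₁₂ h₃₄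
  simp only [Zsqrtd.re_mul, Zsqrtd.im_mul, Zsqrtd.re_add, Zsqrtd.im_add, Zsqrtd.re_star,
    Zsqrtd.im_star]
  push_cast
  convert key z₁.re z₁.im z₂.re z₂.im z₃.re z₃.im z₄.re z₄.im
    (by linear_combination h₁₂) (by linear_combination h₃₄) using 1
  ring

theorem one_add_I_dvd_of_four_dvd {z₁ z₂ : ℤ[i]} (h : 4 ∣ z₁.norm + z₂.norm) :
    (⟨1, 1⟩ : ℤ[i]) ∣ z₁ ∧ (⟨1, 1⟩ : ℤ[i]) ∣ z₂ := by
  have key : ∀ a b c d : ZMod 4, a * a + b * b + c * c + d * d = 0 →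
      2 * (a + b) = 0 ∧ 2 * (c + d) = 0 := by decide
  have hdvd (x : ℤ) : 4 ∣ x ↔ (x : ZMod 4) = 0 := (ZMod.intCast_zmod_eq_zero_iff_dvd x 4).symm
  rw [hdvd, Zsqrtd.norm_def, Zsqrtd.norm_def] at h
  push_cast at h
  obtain ⟨h₁, h₂⟩ := key z₁.re z₁.im z₂.re z₂.im (by linear_combination h)
  constructor <;> apply one_add_I_dvd_of_two_dvd <;>
    exact Int.dvd_of_mul_dvd_mul_left two_ne_zero ((hdvd _).2 (by push_cast; assumption))

theorem dNumerator_ne_zero {z₁ z₂ z₃ z₄ : ℤ[i]} (hN : z₁.norm + z₂.norm = z₃.norm + z₄.norm)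
    (h0 : z₁.norm + z₂.norm ≠ 0) : dNumerator z₁ z₂ z₃ z₄ ≠ 0 := by
  intro hD
  have h₂ : 2 ∣ z₁.norm + z₂.norm := (dvd_add_left (dvd_mul_right 2 _)).mp (hD ▸ dvd_zero 2)
  obtain ⟨k, hk⟩ := two_dvd_re_one_add_I_mul h₂ (hN ▸ h₂)
  have h₄ : 4 ∣ z₁.norm + z₂.norm := ⟨-k, by rw [dNumerator, hk] at hD; linarith⟩
  obtain ⟨⟨w₁, rfl⟩, w₂, rfl⟩ := one_add_I_dvd_of_four_dvd h₄
  obtain ⟨⟨w₃, rfl⟩, w₄, rfl⟩ := one_add_I_dvd_of_four_dvd (hN ▸ h₄)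
  simp only [Zsqrtd.norm_mul, norm_one_add_I] at hN h0
  rw [dNumerator_mul, norm_one_add_I] at hD
  exact dNumerator_ne_zero (z₁ := w₁) (z₂ := w₂) (z₃ := w₃) (z₄ := w₄)
    (by linarith) (by omega) (by omega)
termination_by (z₁.norm + z₂.norm).natAbs
decreasing_by
  subst_vars
  simp only [Zsqrtd.norm_mul, norm_one_add_I] at *
  have := norm_nonneg w₁
  have := norm_nonneg w₂
  omega

end GaussianInt

theorem stmt_11 (z₁ z₂ z₃ z₄ : ℂ)
    (h₁ : IsGaussianInt z₁) (h₂ : IsGaussianInt z₂)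
    (h₃ : IsGaussianInt z₃) (h₄ : IsGaussianInt z₄)
    (hnz : ¬ (z₁ = 0 ∧ z₂ = 0 ∧ z₃ = 0 ∧ z₄ = 0))
    (heq : Complex.normSq z₁ + Complex.normSq z₂ = Complex.normSq z₃ + Complex.normSq z₄) :
    ‖(rOpt * ((Complex.normSq z₃ : ℂ) + (Complex.normSq z₄ : ℂ)) -
          Complex.I * conj rOpt * ((Complex.normSq z₁ : ℂ) + (Complex.normSq z₂ : ℂ)) +
          (z₁ * conj z₃ + z₂ * conj z₄) -
          Complex.I * (conj z₁ * z₃ + conj z₂ * z₄))‖ ^ 2 ≥ 1 / 2 := by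
  rw [sq_norm_D heq]
  obtain ⟨w₁, rfl⟩ := h₁.exists_toComplex_eq
  obtain ⟨w₂, rfl⟩ := h₂.exists_toComplex_eq
  obtain ⟨w₃, rfl⟩ := h₃.exists_toComplex_eq
  obtain ⟨w₄, rfl⟩ := h₄.exists_toComplex_eq
  have hN : w₁.norm + w₂.norm = w₃.norm + w₄.norm := by
    simpa only [← GaussianInt.intCast_real_norm, ← Int.cast_add, Int.cast_inj] using heq
  have hN0 : w₁.norm + w₂.norm ≠ 0 := by
    rw [Ne, GaussianInt.norm_add_norm_eq_zero]
    rintro ⟨rfl, rfl⟩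
    obtain ⟨rfl, rfl⟩ := GaussianInt.norm_add_norm_eq_zero.mp (by simpa using hN.symm)
    simp at hnz
  have hq := Int.one_le_abs (GaussianInt.dNumerator_ne_zero hN hN0)
  rw [← GaussianInt.toComplex_dNumerator, ge_iff_le, div_le_div_iff_of_pos_right two_pos,
    ← sq_abs, ← Int.cast_abs]
  exact_mod_cast one_le_pow₀ hq
end

section
/- Let $r$ be any complex number with $|r| = 1$. For complex numbers $z_1, z_2, z_3, z_4$, define $D(z_1, z_2, z_3, z_4) = r(|z_3|^2 + |z_4|^2) - i\overline{r}(|z_1|^2 + |z_2|^2) + (z_1\overline{z_3} + z_2\overline{z_4}) - i(\overline{z_1} z_3 + \overline{z_2} z_4)$. Then the infimum of $|D(z_1, z_2, z_3, z_4)|^2$ over all Gaussian integers $z_1, z_2, z_3, z_4$, not all zero, is at most $1/2$; i.e., no choice of unit-modulus design coefficient $r$ can achieve a coding gain exceeding $1/2$ over integer-coordinate constellations. -/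
open Complex ComplexConjugate

/-!
Write `t = re r - im r`. On tuples with `|z₁|² + |z₂|² = |z₃|² + |z₄|² = N`, both halves of `D`
have the shape `w - i w̄ = (re w - im w)(1 - i)`, so `D = (N t + m)(1 - i)` with
`m = re w - im w` for `w = z₁ z̄₃ + z₂ z̄₄`, and `|D|² = 2 (N t + m)²`. Since `|r| = 1` forces
`|t| ≤ √2 < 3/2`, one of the five tuples realising `N t + m ∈ {t ± 1, 2t, 3t ± 1}` makes
`|N t + m| ≤ 1/2`.
-/

theorem isGaussianInt_zero : IsGaussianInt 0 := ⟨0, 0, by simp⟩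

theorem isGaussianInt_one : IsGaussianInt 1 := ⟨1, 0, by simp⟩

theorem isGaussianInt_I : IsGaussianInt I := ⟨0, 1, by simp⟩

theorem IsGaussianInt.add {z w : ℂ} (hz : IsGaussianInt z) (hw : IsGaussianInt w) :
    IsGaussianInt (z + w) := by
  obtain ⟨a, b, rfl⟩ := hz
  obtain ⟨c, d, rfl⟩ := hw
  exact ⟨a + c, b + d, by push_cast; ring⟩

theorem IsGaussianInt.neg {z : ℂ} (hz : IsGaussianInt z) : IsGaussianInt (-z) := by
  obtain ⟨a, b, rfl⟩ := hz
  exact ⟨-a, -b, by push_cast; ring⟩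

theorem IsGaussianInt.sub {z w : ℂ} (hz : IsGaussianInt z) (hw : IsGaussianInt w) :
    IsGaussianInt (z - w) :=
  sub_eq_add_neg z w ▸ hz.add hw.neg

theorem sub_I_mul_conj_s13 (w : ℂ) : w - I * conj w = ((w.re - w.im : ℝ) : ℂ) * (1 - I) := by
  apply Complex.ext <;> simp

theorem sq_norm_ofReal_mul_one_sub_I (c : ℝ) : ‖(c : ℂ) * (1 - I)‖ ^ 2 = 2 * c ^ 2 := by
  rw [Complex.sq_norm, Complex.normSq_mul, Complex.normSq_ofReal, Complex.normSq_apply]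
  simp only [sub_re, one_re, I_re, sub_im, one_im, I_im]
  ring

theorem re_sub_im_sq_le_two {r : ℂ} (hr : ‖r‖ = 1) : (r.re - r.im) ^ 2 ≤ 2 := by
  have hn : r.re * r.re + r.im * r.im = 1 := by
    rw [← Complex.normSq_apply, ← Complex.sq_norm, hr, one_pow]
  nlinarith [sq_nonneg (r.re + r.im)]

def codewordDet (r z₁ z₂ z₃ z₄ : ℂ) : ℂ :=
  r * ((Complex.normSq z₃ : ℂ) + (Complex.normSq z₄ : ℂ)) -
    Complex.I * conj r * ((Complex.normSq z₁ : ℂ) + (Complex.normSq z₂ : ℂ)) +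
    (z₁ * conj z₃ + z₂ * conj z₄) -
    Complex.I * (conj z₁ * z₃ + conj z₂ * z₄)

theorem sq_norm_codewordDet_of_normSq_eq (r z₁ z₂ z₃ z₄ : ℂ)
    (hN : Complex.normSq z₁ + Complex.normSq z₂ = Complex.normSq z₃ + Complex.normSq z₄) :
    ‖codewordDet r z₁ z₂ z₃ z₄‖ ^ 2 =
      2 * ((Complex.normSq z₁ + Complex.normSq z₂) * (r.re - r.im) +
        ((z₁ * conj z₃ + z₂ * conj z₄).re - (z₁ * conj z₃ + z₂ * conj z₄).im)) ^ 2 := by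
  have hD : codewordDet r z₁ z₂ z₃ z₄ =
      ((Complex.normSq z₁ + Complex.normSq z₂ : ℝ) : ℂ) * (r - I * conj r) +
        (z₁ * conj z₃ + z₂ * conj z₄ - I * conj (z₁ * conj z₃ + z₂ * conj z₄)) := by
    have hN' : (Complex.normSq z₃ : ℂ) + Complex.normSq z₄ =
        Complex.normSq z₁ + Complex.normSq z₂ := by
      exact_mod_cast hN.symm
    rw [codewordDet, hN']
    simp only [map_add, map_mul, conj_conj]
    push_cast
    ring
  rw [hD, sub_I_mul_conj_s13, sub_I_mul_conj_s13, ← mul_assoc, ← ofReal_mul, ← add_mul, ← ofReal_add,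
    sq_norm_ofReal_mul_one_sub_I]

theorem sInf_sq_norm_codewordDet_le_half (r : ℂ) {z₁ z₂ z₃ z₄ : ℂ}
    (g₁ : IsGaussianInt z₁) (g₂ : IsGaussianInt z₂) (g₃ : IsGaussianInt z₃)
    (g₄ : IsGaussianInt z₄) (hnz : ¬ (z₁ = 0 ∧ z₂ = 0 ∧ z₃ = 0 ∧ z₄ = 0))
    (hN : Complex.normSq z₁ + Complex.normSq z₂ = Complex.normSq z₃ + Complex.normSq z₄)
    (hsmall : ((Complex.normSq z₁ + Complex.normSq z₂) * (r.re - r.im) +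
        ((z₁ * conj z₃ + z₂ * conj z₄).re - (z₁ * conj z₃ + z₂ * conj z₄).im)) ^ 2 ≤ 1 / 4) :
    sInf {y : ℝ | ∃ z₁ z₂ z₃ z₄ : ℂ,
        IsGaussianInt z₁ ∧ IsGaussianInt z₂ ∧ IsGaussianInt z₃ ∧ IsGaussianInt z₄ ∧
        ¬ (z₁ = 0 ∧ z₂ = 0 ∧ z₃ = 0 ∧ z₄ = 0) ∧ y = ‖codewordDet r z₁ z₂ z₃ z₄‖ ^ 2} ≤
      1 / 2 := by
  refine le_trans (csInf_le ⟨0, ?_⟩ ⟨z₁, z₂, z₃, z₄, g₁, g₂, g₃, g₄, hnz, rfl⟩) ?_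
  · rintro _ ⟨-, -, -, -, -, -, -, -, -, rfl⟩
    positivity
  · rw [sq_norm_codewordDet_of_normSq_eq r _ _ _ _ hN]
    linarith

theorem exists_small_affine_combination {t : ℝ} (ht : t ^ 2 ≤ 2) :
    (t + 1) ^ 2 ≤ 1 / 4 ∨ (3 * t + 1) ^ 2 ≤ 1 / 4 ∨ (2 * t) ^ 2 ≤ 1 / 4 ∨
      (3 * t - 1) ^ 2 ≤ 1 / 4 ∨ (t - 1) ^ 2 ≤ 1 / 4 := by
  have hlo : -(3 / 2) ≤ t := by nlinarith
  have hhi : t ≤ 3 / 2 := by nlinarith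
  rcases le_or_gt t (-(1 / 2)) with h1 | h1
  · left; nlinarith
  rcases le_or_gt t (-(1 / 4)) with h2 | h2
  · right; left; nlinarith
  rcases le_or_gt t (1 / 4) with h3 | h3
  · right; right; left; nlinarith
  rcases le_or_gt t (1 / 2) with h4 | h4
  · right; right; right; left; nlinarith
  · right; right; right; right; nlinarith

theorem stmt_13 (r : ℂ) (hr : ‖r‖ = 1) :
    sInf {y : ℝ | ∃ z₁ z₂ z₃ z₄ : ℂ,
        IsGaussianInt z₁ ∧ IsGaussianInt z₂ ∧ IsGaussianInt z₃ ∧ IsGaussianInt z₄ ∧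
        ¬ (z₁ = 0 ∧ z₂ = 0 ∧ z₃ = 0 ∧ z₄ = 0) ∧
        y = ‖(r * ((Complex.normSq z₃ : ℂ) + (Complex.normSq z₄ : ℂ)) -
              Complex.I * conj r * ((Complex.normSq z₁ : ℂ) + (Complex.normSq z₂ : ℂ)) +
              (z₁ * conj z₃ + z₂ * conj z₄) -
              Complex.I * (conj z₁ * z₃ + conj z₂ * z₄))‖ ^ 2} ≤ 1 / 2 := by
  have g₀ := isGaussianInt_zero
  have g₁ := isGaussianInt_one
  have gI := isGaussianInt_I
  rcases exists_small_affine_combination (re_sub_im_sq_le_two hr) with h | h | h | h | h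
  · refine sInf_sq_norm_codewordDet_le_half r g₁ g₀ gI g₀ (by simp)
      (by norm_num [normSq_apply]) ?_
    norm_num [normSq_apply] at h ⊢; linarith
  · refine sInf_sq_norm_codewordDet_le_half r g₁ (g₁.add gI) gI.neg (g₁.add gI) (by simp)
      (by norm_num [normSq_apply]) ?_
    norm_num [normSq_apply] at h ⊢; linarith
  · refine sInf_sq_norm_codewordDet_le_half r g₁ g₁ g₁ gI.neg (by simp)
      (by norm_num [normSq_apply]) ?_
    norm_num [normSq_apply] at h ⊢; linarith
  · refine sInf_sq_norm_codewordDet_le_half r g₁ (g₁.add gI) gI (g₁.sub gI) (by simp)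
      (by norm_num [normSq_apply]) ?_
    norm_num [normSq_apply] at h ⊢; linarith
  · refine sInf_sq_norm_codewordDet_le_half r g₁ g₀ gI.neg g₀ (by simp)
      (by norm_num [normSq_apply]) ?_
    norm_num [normSq_apply] at h ⊢; linarith
end

section
/- Let $c > 0$ be a real number and let $r = \frac{1 + \sqrt{7}}{4} + i\,\frac{-1 + \sqrt{7}}{4}$. For complex numbers $z_1, z_2, z_3, z_4$, define $D(z_1, z_2, z_3, z_4) = r(|z_3|^2 + |z_4|^2) - i\overline{r}(|z_1|^2 + |z_2|^2) + (z_1\overline{z_3} + z_2\overline{z_4}) - i(\overline{z_1} z_3 + \overline{z_2} z_4)$. If $z_1, z_2, z_3, z_4$ are each of the form $c \cdot w$ with $w$ a Gaussian integer, and not all of them are zero, then $|D(z_1, z_2, z_3, z_4)|^2 \geq c^4/2$. In particular, any constellation whose points lie on a square grid of spacing $c$ (such as the proposed APSK constellations with points on square grids and ring radii $c\sqrt{m^2+n^2}$ for integers $m, n$) yields a non-vanishing coding gain of at least $c^4/2$ for the code with design coefficient $r$. -/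
/-!
Writing `A = |z₃|² + |z₄|²`, `B = |z₁|² + |z₂|²` and `P = z₁ z̄₃ + z₂ z̄₄`, one has
`8 |D|² = 7 (A - B)² + (A + B + 4 (Re P - Im P))²`. For Gaussian integers the right-hand side is
an integer divisible by `4`, so it suffices to show that it does not vanish. If it did, then
`A = B = 2t` with `t = Im P - Re P`, and Lagrange's identity `AB = |P|² + |z₁ z₄ - z₂ z₃|²` turns
this into an integral zero of `x² + 2y² + 2z² - 7w²`. That form is anisotropic at `2`, so `t = 0`
and all `zⱼ` vanish. The general case is the Gaussian one scaled by `c`, as `D` is homogeneous of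
degree `2`.
-/

open Complex ComplexConjugate

noncomputable def codewordDiffDet (z₁ z₂ z₃ z₄ : ℂ) : ℂ :=
  rOpt * ((Complex.normSq z₃ : ℂ) + (Complex.normSq z₄ : ℂ)) -
    Complex.I * conj rOpt * ((Complex.normSq z₁ : ℂ) + (Complex.normSq z₂ : ℂ)) +
    (z₁ * conj z₃ + z₂ * conj z₄) -
    Complex.I * (conj z₁ * z₃ + conj z₂ * z₄)

def detForm {R : Type*} [CommRing R] (A B k : R) : R :=
  7 * (A - B) ^ 2 + (A + B + 4 * k) ^ 2

theorem Int.four_dvd_detForm (A B k : ℤ) : 4 ∣ detForm A B k :=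
  ⟨2 * A ^ 2 + 2 * B ^ 2 - 3 * A * B + 2 * k * (A + B) + 4 * k ^ 2, by unfold detForm; ring⟩

theorem Int.two_dvd_of_four_mul_intCast_eq_zero {x : ℤ} (h : 4 * (x : ZMod 8) = 0) : 2 ∣ x := by
  have h' : ((4 * x : ℤ) : ZMod 8) = 0 := by push_cast; exact h
  have := (ZMod.intCast_zmod_eq_zero_iff_dvd _ 8).mp h'
  omega

theorem Int.two_dvd_of_sq_add_two_sq_add_two_sq_eq_seven_sq {s u v t : ℤ}
    (h : s ^ 2 + 2 * u ^ 2 + 2 * v ^ 2 = 7 * t ^ 2) : 2 ∣ s ∧ 2 ∣ t := by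
  have mod8 : ∀ s u v t : ZMod 8, s ^ 2 + 2 * u ^ 2 + 2 * v ^ 2 = 7 * t ^ 2 →
      4 * s = 0 ∧ 4 * t = 0 := by decide
  obtain ⟨hs, ht⟩ := mod8 s u v t (by exact_mod_cast congrArg (Int.cast : ℤ → ZMod 8) h)
  exact ⟨two_dvd_of_four_mul_intCast_eq_zero hs, two_dvd_of_four_mul_intCast_eq_zero ht⟩

theorem Int.two_dvd_of_two_mul_sq_add_sq_add_sq_eq_fourteen_mul_sq {s u v t : ℤ}
    (h : 2 * s ^ 2 + u ^ 2 + v ^ 2 = 14 * t ^ 2) : 2 ∣ u ∧ 2 ∣ v := by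
  have mod8 : ∀ s u v t : ZMod 8, 2 * s ^ 2 + u ^ 2 + v ^ 2 = 14 * t ^ 2 →
      4 * u = 0 ∧ 4 * v = 0 := by decide
  obtain ⟨hu, hv⟩ := mod8 s u v t (by exact_mod_cast congrArg (Int.cast : ℤ → ZMod 8) h)
  exact ⟨two_dvd_of_four_mul_intCast_eq_zero hu, two_dvd_of_four_mul_intCast_eq_zero hv⟩

theorem Int.eq_zero_of_sq_add_two_sq_add_two_sq_eq_seven_sq {s u v t : ℤ}
    (h : s ^ 2 + 2 * u ^ 2 + 2 * v ^ 2 = 7 * t ^ 2) : t = 0 := by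
  induction hn : t.natAbs using Nat.strong_induction_on generalizing s u v t with
  | _ n ih =>
    obtain ⟨⟨s, rfl⟩, ⟨t, rfl⟩⟩ := two_dvd_of_sq_add_two_sq_add_two_sq_eq_seven_sq h
    obtain ⟨⟨u, rfl⟩, ⟨v, rfl⟩⟩ :=
      two_dvd_of_two_mul_sq_add_sq_add_sq_eq_fourteen_mul_sq (s := s) (u := u) (v := v) (t := t)
        (by linarith)
    rcases eq_or_ne t 0 with ht | ht
    · rw [ht, mul_zero]
    · exact absurd (ih t.natAbs (by omega) (s := s) (u := u) (v := v) (by linarith) rfl) ht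

theorem Int.eq_zero_of_detForm_eq_zero {A B p q u v : ℤ}
    (hAB : A * B = p ^ 2 + q ^ 2 + u ^ 2 + v ^ 2) (h : detForm A B (p - q) = 0) :
    A = 0 ∧ B = 0 := by
  unfold detForm at h
  have hdiff : A - B = 0 := by nlinarith [sq_nonneg (A - B), sq_nonneg (A + B + 4 * (p - q))]
  have hsum : A + B + 4 * (p - q) = 0 := by
    nlinarith [sq_nonneg (A - B), sq_nonneg (A + B + 4 * (p - q))]
  obtain rfl : A = 2 * (q - p) := by omega
  obtain rfl : B = 2 * (q - p) := by omega
  have ht := Int.eq_zero_of_sq_add_two_sq_add_two_sq_eq_seven_sq (s := 2 * p + (q - p)) (u := u)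
    (v := v) (t := q - p) (by linear_combination (-2) * hAB)
  omega

theorem Zsqrtd.norm_add_norm_mul_norm_add_norm {d : ℤ} (x₁ x₂ x₃ x₄ : ℤ√d) :
    (x₁.norm + x₂.norm) * (x₃.norm + x₄.norm) =
      (x₁ * star x₃ + x₂ * star x₄).norm + (x₁ * x₄ - x₂ * x₃).norm := by
  simp only [Zsqrtd.norm_def, Zsqrtd.re_add, Zsqrtd.im_add, Zsqrtd.re_mul, Zsqrtd.im_mul,
    Zsqrtd.re_sub, Zsqrtd.im_sub, Zsqrtd.re_star, Zsqrtd.im_star]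
  ring

theorem GaussianInt.detForm_ne_zero {x₁ x₂ x₃ x₄ : GaussianInt}
    (hx : ¬(x₁ = 0 ∧ x₂ = 0 ∧ x₃ = 0 ∧ x₄ = 0)) :
    detForm (x₃.norm + x₄.norm) (x₁.norm + x₂.norm)
      ((x₁ * star x₃ + x₂ * star x₄).re - (x₁ * star x₃ + x₂ * star x₄).im) ≠ 0 := by
  intro h
  have hAB := Zsqrtd.norm_add_norm_mul_norm_add_norm x₁ x₂ x₃ x₄
  rw [Zsqrtd.norm_def (x₁ * star x₃ + x₂ * star x₄), Zsqrtd.norm_def (x₁ * x₄ - x₂ * x₃)] at hAB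
  obtain ⟨hA, hB⟩ := Int.eq_zero_of_detForm_eq_zero
    (u := (x₁ * x₄ - x₂ * x₃).re) (v := (x₁ * x₄ - x₂ * x₃).im) (by linear_combination hAB) h
  have h0 := GaussianInt.norm_nonneg
  refine hx ⟨?_, ?_, ?_, ?_⟩ <;> rw [← GaussianInt.norm_eq_zero] <;>
    linarith [h0 x₁, h0 x₂, h0 x₃, h0 x₄]

theorem IsGaussianInt.exists_toComplex_eq_s14 {z : ℂ} (hz : IsGaussianInt z) :
    ∃ x : GaussianInt, (x : ℂ) = z := by
  obtain ⟨a, b, rfl⟩ := hz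
  exact ⟨⟨a, b⟩, GaussianInt.toComplex_def' a b⟩

/-- Follows from `|r| = 1`, `Re r - Im r = 1/2` and `Re r * Im r = 3/8`. -/
theorem sq_norm_rOpt_mul_sub_add_sub (A B : ℝ) (P : ℂ) :
    8 * ‖rOpt * A - I * conj rOpt * B + P - I * conj P‖ ^ 2 = detForm A B (P.re - P.im) := by
  have h7 : Real.sqrt 7 ^ 2 = 7 := Real.sq_sqrt (by norm_num)
  rw [Complex.sq_norm, Complex.normSq_apply, detForm]
  simp only [rOpt, add_re, add_im, sub_re, sub_im, mul_re, mul_im, I_re, I_im, ofReal_re,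
    ofReal_im, conj_re, conj_im]
  linear_combination (A - B) ^ 2 * h7

theorem sq_norm_codewordDiffDet (z₁ z₂ z₃ z₄ : ℂ) :
    8 * ‖codewordDiffDet z₁ z₂ z₃ z₄‖ ^ 2 =
      detForm (normSq z₃ + normSq z₄) (normSq z₁ + normSq z₂)
        ((z₁ * conj z₃ + z₂ * conj z₄).re - (z₁ * conj z₃ + z₂ * conj z₄).im) := by
  rw [← sq_norm_rOpt_mul_sub_add_sub]
  simp only [codewordDiffDet, map_add, map_mul, conj_conj, ofReal_add]

theorem sq_norm_codewordDiffDet_toComplex (x₁ x₂ x₃ x₄ : GaussianInt) :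
    8 * ‖codewordDiffDet x₁ x₂ x₃ x₄‖ ^ 2 =
      (detForm (x₃.norm + x₄.norm) (x₁.norm + x₂.norm)
        ((x₁ * star x₃ + x₂ * star x₄).re - (x₁ * star x₃ + x₂ * star x₄).im) : ℤ) := by
  rw [sq_norm_codewordDiffDet]
  simp only [detForm, ← GaussianInt.intCast_real_norm, ← GaussianInt.toComplex_star,
    ← GaussianInt.toComplex_mul, ← GaussianInt.toComplex_add, ← GaussianInt.intCast_re,
    ← GaussianInt.intCast_im]
  push_cast
  ring

theorem codewordDiffDet_ofReal_mul (c : ℝ) (z₁ z₂ z₃ z₄ : ℂ) :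
    codewordDiffDet (c * z₁) (c * z₂) (c * z₃) (c * z₄) =
      (c : ℂ) ^ 2 * codewordDiffDet z₁ z₂ z₃ z₄ := by
  simp only [codewordDiffDet, normSq_ofReal, map_mul, conj_ofReal, ofReal_mul]
  ring

theorem sq_norm_codewordDiffDet_ofReal_mul (c : ℝ) (z₁ z₂ z₃ z₄ : ℂ) :
    ‖codewordDiffDet (c * z₁) (c * z₂) (c * z₃) (c * z₄)‖ ^ 2 =
      c ^ 4 * ‖codewordDiffDet z₁ z₂ z₃ z₄‖ ^ 2 := by
  rw [codewordDiffDet_ofReal_mul, norm_mul, norm_pow, norm_real, Real.norm_eq_abs, sq_abs]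
  ring

theorem one_half_le_sq_norm_codewordDiffDet {x₁ x₂ x₃ x₄ : GaussianInt}
    (hx : ¬(x₁ = 0 ∧ x₂ = 0 ∧ x₃ = 0 ∧ x₄ = 0)) :
    1 / 2 ≤ ‖codewordDiffDet x₁ x₂ x₃ x₄‖ ^ 2 := by
  have hN := sq_norm_codewordDiffDet_toComplex x₁ x₂ x₃ x₄
  set N := detForm (x₃.norm + x₄.norm) (x₁.norm + x₂.norm)
    ((x₁ * star x₃ + x₂ * star x₄).re - (x₁ * star x₃ + x₂ * star x₄).im)
  have h4 : 4 ≤ N := by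
    have hdvd : 4 ∣ N := Int.four_dvd_detForm _ _ _
    have hN0 := GaussianInt.detForm_ne_zero hx
    have hNnonneg : (0 : ℝ) ≤ N := by rw [← hN]; positivity
    have : 0 ≤ N := by exact_mod_cast hNnonneg
    omega
  have : (4 : ℝ) ≤ N := by exact_mod_cast h4
  linarith

theorem stmt_14_general (c : ℝ) (z₁ z₂ z₃ z₄ : ℂ)
    (h₁ : ∃ w : ℂ, IsGaussianInt w ∧ z₁ = (c : ℂ) * w)
    (h₂ : ∃ w : ℂ, IsGaussianInt w ∧ z₂ = (c : ℂ) * w)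
    (h₃ : ∃ w : ℂ, IsGaussianInt w ∧ z₃ = (c : ℂ) * w)
    (h₄ : ∃ w : ℂ, IsGaussianInt w ∧ z₄ = (c : ℂ) * w)
    (hnz : ¬ (z₁ = 0 ∧ z₂ = 0 ∧ z₃ = 0 ∧ z₄ = 0)) :
    ‖
        (rOpt * ((Complex.normSq z₃ : ℂ) + (Complex.normSq z₄ : ℂ)) -
          Complex.I * conj rOpt * ((Complex.normSq z₁ : ℂ) + (Complex.normSq z₂ : ℂ)) +
          (z₁ * conj z₃ + z₂ * conj z₄) -
          Complex.I * (conj z₁ * z₃ + conj z₂ * z₄))‖ ^ 2 ≥ c ^ 4 / 2 := by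
  obtain ⟨_, hw₁, rfl⟩ := h₁
  obtain ⟨_, hw₂, rfl⟩ := h₂
  obtain ⟨_, hw₃, rfl⟩ := h₃
  obtain ⟨_, hw₄, rfl⟩ := h₄
  obtain ⟨x₁, rfl⟩ := hw₁.exists_toComplex_eq_s14
  obtain ⟨x₂, rfl⟩ := hw₂.exists_toComplex_eq_s14
  obtain ⟨x₃, rfl⟩ := hw₃.exists_toComplex_eq_s14
  obtain ⟨x₄, rfl⟩ := hw₄.exists_toComplex_eq_s14
  have hx : ¬(x₁ = 0 ∧ x₂ = 0 ∧ x₃ = 0 ∧ x₄ = 0) := by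
    rintro ⟨rfl, rfl, rfl, rfl⟩
    simp at hnz
  change ‖codewordDiffDet (c * x₁) (c * x₂) (c * x₃) (c * x₄)‖ ^ 2 ≥ c ^ 4 / 2
  rw [sq_norm_codewordDiffDet_ofReal_mul]
  have := mul_le_mul_of_nonneg_left (one_half_le_sq_norm_codewordDiffDet hx)
    (by positivity : (0 : ℝ) ≤ c ^ 4)
  linarith

theorem stmt_14 (c : ℝ) (hc : 0 < c) (z₁ z₂ z₃ z₄ : ℂ)
    (h₁ : ∃ w : ℂ, IsGaussianInt w ∧ z₁ = (c : ℂ) * w)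
    (h₂ : ∃ w : ℂ, IsGaussianInt w ∧ z₂ = (c : ℂ) * w)
    (h₃ : ∃ w : ℂ, IsGaussianInt w ∧ z₃ = (c : ℂ) * w)
    (h₄ : ∃ w : ℂ, IsGaussianInt w ∧ z₄ = (c : ℂ) * w)
    (hnz : ¬ (z₁ = 0 ∧ z₂ = 0 ∧ z₃ = 0 ∧ z₄ = 0)) :
    ‖
        (rOpt * ((Complex.normSq z₃ : ℂ) + (Complex.normSq z₄ : ℂ)) -
          Complex.I * conj rOpt * ((Complex.normSq z₁ : ℂ) + (Complex.normSq z₂ : ℂ)) +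
          (z₁ * conj z₃ + z₂ * conj z₄) -
          Complex.I * (conj z₁ * z₃ + conj z₂ * z₄))‖ ^ 2 ≥ c ^ 4 / 2 :=
  stmt_14_general c z₁ z₂ z₃ z₄ h₁ h₂ h₃ h₄ hnz
end
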